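/- arXiv:2402.01131 — 3 statements merged into one kernel-verified Lean document; each statement's English description precedes it below -/
import Mathlib

section
/- Let γ > 1, K > 0 and m ≠ 0 be real constants, define ξ(ρ) = m²/(2ρ²) + (γ/(γ−1))·K·ρ^(γ−1) for ρ > 0, and set ρ⋆ = (m²/(γK))^(1/(γ+1)), ξ⋆ = ξ(ρ⋆). For any real level λ: (i) if λ < ξ⋆ then there is no ρ > 0 with ξ(ρ) = λ; (ii) if λ = ξ⋆ then ρ⋆ is the unique ρ > 0 with ξ(ρ) = λ; (iii) if λ > ξ⋆ then there exist exactly two solutions ρ > 0 of ξ(ρ) = λ, one lying in (0, ρ⋆) and one lying in (ρ⋆, ∞). -/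
open Real Set Filter Topology

/-!
Since `ξ'(ρ) = (γ K ρ^(γ+1) - m²) / ρ³`, the function `ξ` is strictly decreasing on `(0, ρ⋆]` and
strictly increasing on `[ρ⋆, ∞)`, and it tends to `+∞` as `ρ → 0⁺` and as `ρ → ∞`. So `ξ⋆` is the
strict minimum of `ξ`, and by the intermediate value theorem every level above it is attained
exactly once on each side of `ρ⋆`.
-/

section Valley

variable {f : ℝ → ℝ} {c : ℝ}

theorem apply_lt_apply_of_strictAntiOn_of_strictMonoOn (hanti : StrictAntiOn f (Ioc 0 c))
    (hmono : StrictMonoOn f (Ici c)) {ρ : ℝ} (hρ : 0 < ρ) (hne : ρ ≠ c) : f c < f ρ := by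
  rcases hne.lt_or_gt with h | h
  · exact hanti ⟨hρ, h.le⟩ ⟨hρ.trans h, le_rfl⟩ h
  · exact hmono self_mem_Ici h.le h

theorem exists_mem_Ioo_apply_eq_of_tendsto_nhdsGT_zero {lam : ℝ} (hc : 0 < c)
    (hf : ContinuousOn f (Ioc 0 c)) (hlim : Tendsto f (𝓝[>] 0) atTop) (hlam : f c < lam) :
    ∃ ρ ∈ Ioo 0 c, f ρ = lam := by
  obtain ⟨a, hfa, ha⟩ := ((hlim.eventually_ge_atTop lam).and (Ioo_mem_nhdsGT hc)).exists
  obtain ⟨ρ, hρ, rfl⟩ := intermediate_value_Icc' ha.2.le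
    (hf.mono fun x hx => ⟨ha.1.trans_le hx.1, hx.2⟩) ⟨hlam.le, hfa⟩
  exact ⟨ρ, ⟨ha.1.trans_le hρ.1, hρ.2.lt_of_ne (by rintro rfl; exact lt_irrefl _ hlam)⟩, rfl⟩

theorem exists_mem_Ioi_apply_eq_of_tendsto_atTop {lam : ℝ} (hf : ContinuousOn f (Ici c))
    (hlim : Tendsto f atTop atTop) (hlam : f c < lam) : ∃ ρ ∈ Ioi c, f ρ = lam := by
  obtain ⟨b, hfb, hb⟩ := ((hlim.eventually_ge_atTop lam).and (eventually_ge_atTop c)).exists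
  obtain ⟨ρ, hρ, rfl⟩ := intermediate_value_Icc hb (hf.mono Icc_subset_Ici_self) ⟨hlam.le, hfb⟩
  exact ⟨ρ, hρ.1.lt_of_ne (by rintro rfl; exact lt_irrefl _ hlam), rfl⟩

theorem level_set_trichotomy_of_strictAntiOn_of_strictMonoOn (hc : 0 < c)
    (hanti : StrictAntiOn f (Ioc 0 c)) (hmono : StrictMonoOn f (Ici c))
    (hf : ContinuousOn f (Ioi 0)) (hlim₀ : Tendsto f (𝓝[>] 0) atTop)
    (hlim : Tendsto f atTop atTop) (lam : ℝ) :
    (lam < f c → ¬ ∃ ρ : ℝ, 0 < ρ ∧ f ρ = lam) ∧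
    (lam = f c → ∀ ρ : ℝ, 0 < ρ → (f ρ = lam ↔ ρ = c)) ∧
    (f c < lam → ∃ ρ₁ ρ₂ : ℝ, ρ₁ ∈ Ioo 0 c ∧ ρ₂ ∈ Ioi c ∧ f ρ₁ = lam ∧ f ρ₂ = lam ∧
      ∀ ρ : ℝ, 0 < ρ → f ρ = lam → ρ = ρ₁ ∨ ρ = ρ₂) := by
  have hmin {ρ : ℝ} (hρ : 0 < ρ) (hne : ρ ≠ c) : f c < f ρ :=
    apply_lt_apply_of_strictAntiOn_of_strictMonoOn hanti hmono hρ hne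
  refine ⟨?_, ?_, ?_⟩
  · rintro hlam ⟨ρ, hρ, rfl⟩
    rcases eq_or_ne ρ c with rfl | hne
    · exact lt_irrefl _ hlam
    · exact lt_asymm hlam (hmin hρ hne)
  · rintro rfl ρ hρ
    refine ⟨fun hfρ => by_contra fun hne => (hmin hρ hne).ne' hfρ, fun h => h ▸ rfl⟩
  · intro hlam
    obtain ⟨ρ₁, hρ₁, hfρ₁⟩ := exists_mem_Ioo_apply_eq_of_tendsto_nhdsGT_zero hc
      (hf.mono Ioc_subset_Ioi_self) hlim₀ hlam
    obtain ⟨ρ₂, hρ₂, hfρ₂⟩ := exists_mem_Ioi_apply_eq_of_tendsto_atTop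
      (hf.mono (Ici_subset_Ioi.mpr hc)) hlim hlam
    refine ⟨ρ₁, ρ₂, hρ₁, hρ₂, hfρ₁, hfρ₂, fun ρ hρ hfρ => ?_⟩
    rcases lt_trichotomy ρ c with h | rfl | h
    · exact .inl (hanti.injOn ⟨hρ, h.le⟩ ⟨hρ₁.1, hρ₁.2.le⟩ (hfρ.trans hfρ₁.symm))
    · exact absurd hfρ hlam.ne
    · exact .inr (hmono.injOn h.le (mem_Ici.mpr hρ₂.le) (hfρ.trans hfρ₂.symm))

end Valley

noncomputable def xi (γ K m ρ : ℝ) : ℝ :=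
  m ^ 2 / (2 * ρ ^ 2) + (γ / (γ - 1)) * K * ρ ^ (γ - 1)

noncomputable def criticalDensity (γ K m : ℝ) : ℝ :=
  (m ^ 2 / (γ * K)) ^ ((1 : ℝ) / (γ + 1))

section Xi

variable {γ K m ρ : ℝ}

theorem criticalDensity_pos (hγ : 0 < γ) (hK : 0 < K) (hm : m ≠ 0) :
    0 < criticalDensity γ K m :=
  rpow_pos_of_pos (by positivity) _

theorem lt_criticalDensity_iff (hγ : 0 < γ) (hK : 0 < K) (hρ : 0 ≤ ρ) :
    ρ < criticalDensity γ K m ↔ γ * K * ρ ^ (γ + 1) < m ^ 2 := by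
  rw [criticalDensity, one_div, lt_rpow_inv_iff_of_pos hρ (by positivity) (by linarith),
    lt_div_iff₀ (by positivity), mul_comm]

theorem criticalDensity_lt_iff (hγ : 0 < γ) (hK : 0 < K) (hρ : 0 ≤ ρ) :
    criticalDensity γ K m < ρ ↔ m ^ 2 < γ * K * ρ ^ (γ + 1) := by
  rw [criticalDensity, one_div, rpow_inv_lt_iff_of_pos (by positivity) hρ (by linarith),
    div_lt_iff₀ (by positivity), mul_comm]

theorem hasDerivAt_xi (hγ : γ ≠ 1) (hρ : 0 < ρ) :
    HasDerivAt (xi γ K m) ((γ * K * ρ ^ (γ + 1) - m ^ 2) / ρ ^ 3) ρ := by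
  have hkinetic : HasDerivAt (fun ρ : ℝ => m ^ 2 / (2 * ρ ^ 2)) (-(m ^ 2) / ρ ^ 3) ρ := by
    have := (hasDerivAt_const ρ (m ^ 2)).div ((hasDerivAt_pow 2 ρ).const_mul 2) (by positivity)
    refine this.congr_deriv ?_
    field_simp
    ring
  have hpressure := ((hasDerivAt_rpow_const (p := γ - 1) (Or.inl hρ.ne')).const_mul
    ((γ / (γ - 1)) * K))
  refine (hkinetic.add hpressure).congr_deriv ?_
  have hsplit : ρ ^ (γ + 1) = ρ ^ (γ - 1 - 1) * ρ ^ 3 := by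
    rw [← rpow_natCast ρ 3, ← rpow_add hρ]
    push_cast
    ring_nf
  have hγ₁ : γ - 1 ≠ 0 := sub_ne_zero.mpr hγ
  rw [hsplit]
  field_simp
  ring

theorem continuousOn_xi (hγ : γ ≠ 1) : ContinuousOn (xi γ K m) (Ioi 0) :=
  fun _ hρ => (hasDerivAt_xi hγ hρ).continuousAt.continuousWithinAt

theorem strictAntiOn_xi (hγ : 1 < γ) (hK : 0 < K) :
    StrictAntiOn (xi γ K m) (Ioc 0 (criticalDensity γ K m)) := by
  refine strictAntiOn_of_deriv_neg (convex_Ioc _ _)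
    ((continuousOn_xi hγ.ne').mono Ioc_subset_Ioi_self) fun ρ hρ => ?_
  rw [interior_Ioc] at hρ
  rw [(hasDerivAt_xi hγ.ne' hρ.1).deriv]
  have := (lt_criticalDensity_iff (by linarith) hK hρ.1.le).mp hρ.2
  exact div_neg_of_neg_of_pos (by linarith) (pow_pos hρ.1 3)

theorem strictMonoOn_xi (hγ : 1 < γ) (hK : 0 < K) (hm : m ≠ 0) :
    StrictMonoOn (xi γ K m) (Ici (criticalDensity γ K m)) := by
  have hc : 0 < criticalDensity γ K m := criticalDensity_pos (by linarith) hK hm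
  refine strictMonoOn_of_deriv_pos (convex_Ici _)
    ((continuousOn_xi hγ.ne').mono (Ici_subset_Ioi.mpr hc)) fun ρ hρ => ?_
  rw [interior_Ici] at hρ
  rw [(hasDerivAt_xi hγ.ne' (hc.trans hρ)).deriv]
  have := (criticalDensity_lt_iff (by linarith) hK (hc.trans hρ).le).mp hρ
  exact div_pos (by linarith) (pow_pos (hc.trans hρ) 3)

theorem tendsto_xi_nhdsGT_zero (hγ : 1 < γ) (hK : 0 < K) (hm : m ≠ 0) :
    Tendsto (xi γ K m) (𝓝[>] 0) atTop := by
  have hkinetic : Tendsto (fun ρ : ℝ => m ^ 2 / (2 * ρ ^ 2)) (𝓝[>] 0) atTop := by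
    have := ((tendsto_pow_atTop two_ne_zero).comp tendsto_inv_nhdsGT_zero).const_mul_atTop
      (by positivity : 0 < m ^ 2 / 2)
    convert this using 2 with ρ
    simp only [Function.comp_apply]
    ring
  refine tendsto_atTop_mono' _ ?_ hkinetic
  filter_upwards [self_mem_nhdsWithin] with ρ (hρ : 0 < ρ)
  have : 0 < γ / (γ - 1) := div_pos (by linarith) (by linarith)
  exact le_add_of_nonneg_right (by positivity)

theorem tendsto_xi_atTop (hγ : 1 < γ) (hK : 0 < K) :
    Tendsto (xi γ K m) atTop atTop := by
  have : 0 < γ / (γ - 1) := div_pos (by linarith) (by linarith)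
  exact Tendsto.nonneg_add_atTop (fun ρ => by positivity)
    ((tendsto_rpow_atTop (by linarith)).const_mul_atTop (by positivity))

end Xi

/-- For γ > 1, K > 0, m ≠ 0, ξ(ρ) = m²/(2ρ²) + (γ/(γ−1))·K·ρ^(γ−1),
ρ⋆ = (m²/(γK))^(1/(γ+1)) and ξ⋆ = ξ(ρ⋆), and any level λ:
(i) if λ < ξ⋆ there is no positive solution of ξ(ρ) = λ;
(ii) if λ = ξ⋆ then ρ⋆ is the unique positive solution;
(iii) if λ > ξ⋆ there are exactly two positive solutions, one in (0,ρ⋆) and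
one in (ρ⋆,∞). -/
theorem xi_level_set_trichotomy
    (γ K m : ℝ) (hγ : 1 < γ) (hK : 0 < K) (hm : m ≠ 0) (lam : ℝ) :
    (lam < (fun ρ : ℝ => m ^ 2 / (2 * ρ ^ 2) + (γ / (γ - 1)) * K * ρ ^ (γ - 1))
        ((m ^ 2 / (γ * K)) ^ ((1 : ℝ) / (γ + 1))) →
      ¬ ∃ ρ : ℝ, 0 < ρ ∧
        m ^ 2 / (2 * ρ ^ 2) + (γ / (γ - 1)) * K * ρ ^ (γ - 1) = lam) ∧
    (lam = (fun ρ : ℝ => m ^ 2 / (2 * ρ ^ 2) + (γ / (γ - 1)) * K * ρ ^ (γ - 1))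
        ((m ^ 2 / (γ * K)) ^ ((1 : ℝ) / (γ + 1))) →
      ∀ ρ : ℝ, 0 < ρ →
        (m ^ 2 / (2 * ρ ^ 2) + (γ / (γ - 1)) * K * ρ ^ (γ - 1) = lam ↔
          ρ = (m ^ 2 / (γ * K)) ^ ((1 : ℝ) / (γ + 1)))) ∧
    ((fun ρ : ℝ => m ^ 2 / (2 * ρ ^ 2) + (γ / (γ - 1)) * K * ρ ^ (γ - 1))
        ((m ^ 2 / (γ * K)) ^ ((1 : ℝ) / (γ + 1))) < lam →
      ∃ ρ₁ ρ₂ : ℝ,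
        ρ₁ ∈ Set.Ioo 0 ((m ^ 2 / (γ * K)) ^ ((1 : ℝ) / (γ + 1))) ∧
        ρ₂ ∈ Set.Ioi ((m ^ 2 / (γ * K)) ^ ((1 : ℝ) / (γ + 1))) ∧
        m ^ 2 / (2 * ρ₁ ^ 2) + (γ / (γ - 1)) * K * ρ₁ ^ (γ - 1) = lam ∧
        m ^ 2 / (2 * ρ₂ ^ 2) + (γ / (γ - 1)) * K * ρ₂ ^ (γ - 1) = lam ∧
        ∀ ρ : ℝ, 0 < ρ →
          m ^ 2 / (2 * ρ ^ 2) + (γ / (γ - 1)) * K * ρ ^ (γ - 1) = lam →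
          ρ = ρ₁ ∨ ρ = ρ₂) :=
  level_set_trichotomy_of_strictAntiOn_of_strictMonoOn (f := xi γ K m)
    (criticalDensity_pos (by linarith) hK hm) (strictAntiOn_xi hγ hK) (strictMonoOn_xi hγ hK hm)
    (continuousOn_xi hγ.ne') (tendsto_xi_nhdsGT_zero hγ hK hm) (tendsto_xi_atTop hγ hK) lam
end

section
/- Let g > 0, θ > 0, b, E, m be real constants with m ≠ 0, set D = E − g·b·θ, and assume D > (3/2)·(g·θ·|m|)^(2/3). Let L = −1 + (27/4)·g²·θ²·m²/D³, t = arccos(L), and define h₁ = (D/(3gθ))·(1 − 2cos(t/3)), h₂ = (D/(3gθ))·(1 + cos(t/3) − √3·sin(t/3)), h₃ = (D/(3gθ))·(1 + cos(t/3) + √3·sin(t/3)). Then h₁ < 0 < h₂ < h₃; in particular the cubic P(h) = gθh³ − Dh² + m²/2 has exactly one negative and two positive real roots. -/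
/-!
Writing `k = D / (3gθ)` and `φ = t / 3`, the choice of `L = cos 3φ` makes
`m² / (2gθ) = 2k³ (1 + cos 3φ)`, so `P(h) / (gθ) = h³ - 3k h² + 2k³ (1 + cos 3φ)`, and the
triple-angle formula factors this cubic with the roots `k (1 - 2 cos φ)` and
`k (1 + cos φ ∓ √3 sin φ)`. Since `m ≠ 0`, the hypothesis on `D` puts `L` in `(-1, 1)`, so
`φ ∈ (0, π/3)`; there `cos φ > 1/2` and `sin φ > 0`, which orders the roots.
-/

open Real

theorem cubic_eq_mul_trig_roots (k φ x : ℝ) :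
    x ^ 3 - 3 * k * x ^ 2 + 2 * k ^ 3 * (1 + cos (3 * φ)) =
      (x - k * (1 - 2 * cos φ)) * (x - k * (1 + cos φ - √3 * sin φ)) *
        (x - k * (1 + cos φ + √3 * sin φ)) := by
  have hsqrt : √3 ^ 2 = 3 := sq_sqrt (by norm_num)
  rw [cos_three_mul]
  linear_combination (x - k * (1 - 2 * cos φ)) * k ^ 2 *
    (sin φ ^ 2 * hsqrt + 3 * sin_sq_add_cos_sq φ)

section TrigRoots

variable {φ : ℝ}

theorem one_sub_two_mul_cos_neg (h0 : 0 ≤ φ) (h1 : φ < π / 3) : 1 - 2 * cos φ < 0 := by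
  have : cos (π / 3) < cos φ := cos_lt_cos_of_nonneg_of_le_pi h0 (by linarith [pi_pos]) h1
  rw [cos_pi_div_three] at this
  linarith

theorem one_add_cos_sub_sqrt_three_mul_sin_pos (h0 : 0 ≤ φ) (h1 : φ < π / 3) :
    0 < 1 + cos φ - √3 * sin φ := by
  have hcos : 1 / 2 < cos φ := by linarith [one_sub_two_mul_cos_neg h0 h1]
  -- `(1 + cos φ)² - (√3 sin φ)² = 2 (2 cos φ - 1) (cos φ + 1)`
  have hsq : (√3 * sin φ) ^ 2 < (1 + cos φ) ^ 2 := by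
    rw [mul_pow, sq_sqrt (by norm_num), sin_sq]
    nlinarith
  linarith [le_abs_self (√3 * sin φ), abs_lt_of_sq_lt_sq hsq (by linarith)]

theorem sqrt_three_mul_sin_pos (h0 : 0 < φ) (h1 : φ < π) : 0 < √3 * sin φ :=
  mul_pos (by positivity) (sin_pos_of_pos_of_lt_pi h0 h1)

end TrigRoots

theorem ripa_discriminant_bounds {g θ m D : ℝ} (hg : 0 < g) (hθ : 0 < θ) (hm : m ≠ 0)
    (hD : (3 / 2) * (g * θ * |m|) ^ ((2 : ℝ) / 3) < D) :
    0 < D ∧ 0 < (27 / 4) * g ^ 2 * θ ^ 2 * m ^ 2 / D ^ 3 ∧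
      (27 / 4) * g ^ 2 * θ ^ 2 * m ^ 2 / D ^ 3 < 2 := by
  have hbase : 0 < g * θ * |m| := by have := abs_pos.2 hm; positivity
  have hlhs : 0 < (3 / 2) * (g * θ * |m|) ^ ((2 : ℝ) / 3) := by positivity
  have hDpos : 0 < D := hlhs.trans hD
  have hcube :
      ((3 / 2) * (g * θ * |m|) ^ ((2 : ℝ) / 3)) ^ 3 = 27 / 8 * (g ^ 2 * θ ^ 2 * m ^ 2) := by
    rw [mul_pow, ← rpow_natCast ((g * θ * |m|) ^ ((2 : ℝ) / 3)) 3, ← rpow_mul hbase.le]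
    norm_num [mul_pow, sq_abs]
  have hlt : 27 / 8 * (g ^ 2 * θ ^ 2 * m ^ 2) < D ^ 3 :=
    hcube ▸ pow_lt_pow_left₀ hD hlhs.le (by norm_num)
  have hm2 : 0 < m ^ 2 := sq_pos_iff.2 hm
  refine ⟨hDpos, by positivity, ?_⟩
  rw [div_lt_iff₀ (by positivity)]
  linarith

theorem existsUnique_neg_root_and_two_pos_roots {P : ℝ → ℝ} {a₀ r₁ r₂ r₃ : ℝ}
    (ha₀ : a₀ ≠ 0) (hP : ∀ x, P x = a₀ * (x - r₁) * (x - r₂) * (x - r₃))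
    (h₁ : r₁ < 0) (h₂ : 0 < r₂) (h₂₃ : r₂ < r₃) :
    (∃! h : ℝ, h < 0 ∧ P h = 0) ∧
    (∃ a c : ℝ, 0 < a ∧ 0 < c ∧ a ≠ c ∧ P a = 0 ∧ P c = 0 ∧
      ∀ h : ℝ, 0 < h → P h = 0 → h = a ∨ h = c) := by
  have hroots : ∀ x, P x = 0 ↔ x = r₁ ∨ x = r₂ ∨ x = r₃ := by
    intro x
    simp only [hP, mul_eq_zero, sub_eq_zero, ha₀, false_or, or_assoc]
  refine ⟨⟨r₁, ⟨h₁, (hroots r₁).2 (Or.inl rfl)⟩, ?_⟩,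
    r₂, r₃, h₂, h₂.trans h₂₃, h₂₃.ne, (hroots r₂).2 (Or.inr (Or.inl rfl)),
    (hroots r₃).2 (Or.inr (Or.inr rfl)), ?_⟩
  · rintro x ⟨hx, hPx⟩
    rcases (hroots x).1 hPx with rfl | rfl | rfl <;> first | rfl | linarith
  · intro x hx hPx
    rcases (hroots x).1 hPx with rfl | rfl | rfl
    · linarith
    · exact Or.inl rfl
    · exact Or.inr rfl

/-- Ordering of the trigonometric roots of the Ripa cubic: h₁ < 0 < h₂ < h₃;
in particular the cubic P(h) = gθh³ − Dh² + m²/2 has exactly one negative and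
exactly two positive real roots. -/
theorem ripa_cubic_roots_order
    (g θ b E m : ℝ) (hg : 0 < g) (hθ : 0 < θ) (hm : m ≠ 0)
    (hD : (3 / 2) * (g * θ * |m|) ^ ((2 : ℝ) / 3) < E - g * b * θ) :
    let D := E - g * b * θ
    let L := -1 + (27 / 4) * g ^ 2 * θ ^ 2 * m ^ 2 / D ^ 3
    let t := Real.arccos L
    let h₁ := (D / (3 * g * θ)) * (1 - 2 * Real.cos (t / 3))
    let h₂ := (D / (3 * g * θ)) *
      (1 + Real.cos (t / 3) - Real.sqrt 3 * Real.sin (t / 3))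
    let h₃ := (D / (3 * g * θ)) *
      (1 + Real.cos (t / 3) + Real.sqrt 3 * Real.sin (t / 3))
    let P : ℝ → ℝ := fun h => g * θ * h ^ 3 - D * h ^ 2 + m ^ 2 / 2
    (h₁ < 0 ∧ 0 < h₂ ∧ h₂ < h₃) ∧
    (∃! h : ℝ, h < 0 ∧ P h = 0) ∧
    (∃ a c : ℝ, 0 < a ∧ 0 < c ∧ a ≠ c ∧ P a = 0 ∧ P c = 0 ∧
      ∀ h : ℝ, 0 < h → P h = 0 → h = a ∨ h = c) := by
  intro D L t h₁ h₂ h₃ P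
  obtain ⟨hDpos, hq0, hq2⟩ := ripa_discriminant_bounds hg hθ hm hD
  have ht0 : 0 < t := arccos_pos.2 (by linarith)
  have htπ : t < π := arccos_lt_pi.2 (by linarith)
  have hk : 0 < D / (3 * g * θ) := by positivity
  have hcos : cos (3 * (t / 3)) = L := by
    rw [mul_div_cancel₀ t three_ne_zero, cos_arccos (by linarith) (by linarith)]
  have hfac : ∀ x, P x = g * θ * (x - h₁) * (x - h₂) * (x - h₃) := by
    intro x
    have hD0 : D ≠ 0 := hDpos.ne'
    simp only [P, h₁, h₂, h₃, mul_assoc (g * θ)]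
    rw [← cubic_eq_mul_trig_roots, hcos]
    simp only [L]
    field_simp
    ring
  have hφ0 : 0 < t / 3 := by positivity
  have hφ : t / 3 < π / 3 := by linarith
  have hord : h₁ < 0 ∧ 0 < h₂ ∧ h₂ < h₃ :=
    ⟨mul_neg_of_pos_of_neg hk (one_sub_two_mul_cos_neg hφ0.le hφ),
      mul_pos hk (one_add_cos_sub_sqrt_three_mul_sin_pos hφ0.le hφ),
      mul_lt_mul_of_pos_left (by linarith [sqrt_three_mul_sin_pos hφ0 (by linarith)]) hk⟩
  exact ⟨hord,
    existsUnique_neg_root_and_two_pos_roots (by positivity) hfac hord.1 hord.2.1 hord.2.2⟩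
end

section
/- Let g > 0, θ > 0, b, E, m be real constants with m ≠ 0, set D = E − g·b·θ, and assume D > (3/2)·(g·θ·|m|)^(2/3). If 0 < a < c are two positive real numbers with P(a) = P(c) = 0, where P(h) = g·θ·h³ − D·h² + m²/2, then g·θ·a³ < m² < g·θ·c³. Equivalently, with u = m/h and Froude number Fr = |u|/√(ghθ), the smaller positive root is supercritical (Fr > 1) and the larger positive root is subcritical (Fr < 1). -/
open Real

/-!
The critical height `x = (m² / (gθ))^(1/3)`, where `gθx³ = m²`, satisfies `(gθ|m|)^(2/3) = gθx`,
so the hypothesis on `D` says exactly that `P(x) = (3/2)m² - Dx² < 0`. Two roots `a < c` of `P`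
factor it as `(h - a)(h - c)(gθh - r)` with `a c r = m²/2 > 0`, so the last factor is positive for
`h ≥ 0` and `P(x) < 0` forces `a < x < c`. Monotonicity of `h ↦ gθh³` finishes.
-/

lemma cubic_eq_mul_of_two_roots {k D q a c : ℝ} (hac : a ≠ c)
    (hPa : k * a ^ 3 - D * a ^ 2 + q = 0) (hPc : k * c ^ 3 - D * c ^ 2 + q = 0) (h : ℝ) :
    k * h ^ 3 - D * h ^ 2 + q = (h - a) * (h - c) * (k * h - (D - k * (a + c))) ∧
      a * c * (D - k * (a + c)) = -q := by
  have hne : a - c ≠ 0 := sub_ne_zero.mpr hac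
  have hsum : k * (a ^ 2 + a * c + c ^ 2) = D * (a + c) := by
    have : (a - c) * (k * (a ^ 2 + a * c + c ^ 2) - D * (a + c)) = 0 := by
      linear_combination hPa - hPc
    linarith [(mul_eq_zero.mp this).resolve_left hne]
  have hprod : a * c * (D - k * (a + c)) = -q := by
    have : (a - c) * (a * c * (D - k * (a + c)) + q) = 0 := by
      linear_combination a * hPc - c * hPa
    linarith [(mul_eq_zero.mp this).resolve_left hne]
  exact ⟨by linear_combination h * hsum + hprod, hprod⟩

lemma mem_Ioo_of_cubic_neg {k D q a c x : ℝ} (hk : 0 < k) (hq : 0 < q) (ha : 0 < a)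
    (hac : a < c) (hPa : k * a ^ 3 - D * a ^ 2 + q = 0) (hPc : k * c ^ 3 - D * c ^ 2 + q = 0)
    (hx : 0 ≤ x) (hPx : k * x ^ 3 - D * x ^ 2 + q < 0) : x ∈ Set.Ioo a c := by
  obtain ⟨hfactor, hprod⟩ := cubic_eq_mul_of_two_roots hac.ne hPa hPc x
  have hr : D - k * (a + c) < 0 := by
    by_contra! hr
    nlinarith [mul_nonneg (mul_pos ha (ha.trans hac)).le hr]
  have hlast : 0 < k * x - (D - k * (a + c)) := by nlinarith [mul_nonneg hk.le hx]
  have hsign : (x - a) * (x - c) < 0 := by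
    by_contra! h
    nlinarith [mul_nonneg h hlast.le]
  rcases mul_neg_iff.mp hsign with ⟨hxa, hxc⟩ | ⟨hxa, hxc⟩
  · exact ⟨by linarith, by linarith⟩
  · linarith

lemma exists_pos_mul_pow_three_eq {k y : ℝ} (hk : 0 < k) (hy : 0 < y) :
    ∃ x : ℝ, 0 < x ∧ k * x ^ 3 = y := by
  refine ⟨(y / k) ^ ((3 : ℕ) : ℝ)⁻¹, by positivity, ?_⟩
  rw [rpow_inv_natCast_pow (by positivity) three_ne_zero]
  field_simp

lemma mul_abs_rpow_two_thirds {k m x : ℝ} (hk : 0 ≤ k) (hx : 0 ≤ x) (hx3 : k * x ^ 3 = m ^ 2) :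
    (k * |m|) ^ ((2 : ℝ) / 3) = k * x := by
  have hsq : (k * |m|) ^ 2 = (k * x) ^ 3 := by
    rw [mul_pow, sq_abs, ← hx3]
    ring
  calc (k * |m|) ^ ((2 : ℝ) / 3) = ((k * |m|) ^ 2) ^ ((3 : ℕ) : ℝ)⁻¹ := by
        rw [← rpow_natCast_mul (by positivity)]
        norm_num [div_eq_mul_inv]
    _ = k * x := by rw [hsq, pow_rpow_inv_natCast (by positivity) three_ne_zero]

/-- If 0 < a < c are two positive roots of the Ripa cubic
P(h) = gθh³ − Dh² + m²/2 (with D = E − gbθ > (3/2)(gθ|m|)^(2/3)), then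
gθa³ < m² < gθc³: the smaller positive root is supercritical (Fr > 1) and
the larger one is subcritical (Fr < 1). -/
theorem ripa_roots_super_sub_critical
    (g θ b E m : ℝ) (hg : 0 < g) (hθ : 0 < θ) (hm : m ≠ 0)
    (hD : (3 / 2) * (g * θ * |m|) ^ ((2 : ℝ) / 3) < E - g * b * θ)
    (a c : ℝ) (ha : 0 < a) (hac : a < c)
    (hPa : g * θ * a ^ 3 - (E - g * b * θ) * a ^ 2 + m ^ 2 / 2 = 0)
    (hPc : g * θ * c ^ 3 - (E - g * b * θ) * c ^ 2 + m ^ 2 / 2 = 0) :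
    g * θ * a ^ 3 < m ^ 2 ∧ m ^ 2 < g * θ * c ^ 3 := by
  have hk : 0 < g * θ := mul_pos hg hθ
  have hm2 : 0 < m ^ 2 := by positivity
  obtain ⟨x, hx, hx3⟩ := exists_pos_mul_pow_three_eq hk hm2
  rw [mul_abs_rpow_two_thirds hk.le hx.le hx3] at hD
  have hPx : g * θ * x ^ 3 - (E - g * b * θ) * x ^ 2 + m ^ 2 / 2 < 0 := by
    nlinarith [mul_lt_mul_of_pos_right hD (pow_pos hx 2)]
  obtain ⟨hax, hxc⟩ := mem_Ioo_of_cubic_neg hk (by positivity) ha hac hPa hPc hx.le hPx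
  rw [← hx3]
  exact ⟨by gcongr, by gcongr⟩
end
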